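/- arXiv:0806.3009 — 3 statements merged into one kernel-verified Lean document; each statement's English description precedes it below -/
import Mathlib

section
/- Let (a_l)_{l≥0} be a real sequence with a_0 = 0 and ∑_{l≥0} (2l+1)|a_l| < ∞, extended by a_{−1} = 0. Define a_l^1 = (l/(2l+1))(a_{l−1} − 2a_l + a_{l+1}) + (1/(2l+1))(a_{l+1} − a_l) for l ≥ 0. Then for every θ ∈ [0, π], (cos θ − 1) · ∑_{l≥1} a_l (2l+1) P_l(cos θ) = ∑_{l≥0} a_l^1 (2l+1) P_l(cos θ), both series converging absolutely. -/
/-!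
Expanding the generating function through
`1 - 2ξ cos θ + ξ² = (1 - ξ e^{iθ}) (1 - ξ e^{-iθ})` gives
`P_n (cos θ) = ∑ₖ cₖ c_{n-k} cos ((n - 2k) θ)` with `cₖ = (2k choose k) / 4 ^ k ≥ 0`,
so `|P_n (cos θ)| ≤ ∑ₖ cₖ c_{n-k} = P_n 1 = 1`. Hence all the series converge absolutely, and the
recurrence `(2l+1) x P_l = (l+1) P_{l+1} + l P_{l-1}` turns multiplication by `x` into two index
shifts; collecting the coefficient of `(2l+1) P_l` gives `a_l^1`.
-/

open Real

/-- Legendre polynomials `P_l`, normalized so that `P_l(1) = 1`, defined by the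
standard three-term recurrence `(l+1) P_{l+1}(x) = (2l+1) x P_l(x) - l P_{l-1}(x)`. -/
noncomputable def legP : ℕ → ℝ → ℝ
  | 0, _ => 1
  | 1, x => x
  | n + 2, x => ((2 * n + 3) * x * legP (n + 1) x - (n + 1) * legP n x) / (n + 2)

/-- The sequence `a^1` from the paper:
`a_l^1 = (l/(2l+1))(a_{l-1} - 2a_l + a_{l+1}) + (1/(2l+1))(a_{l+1} - a_l)`. -/
noncomputable def aone (a : ℤ → ℝ) : ℕ → ℝ := fun l =>
  ((l : ℝ) / (2 * (l : ℝ) + 1)) * (a ((l : ℤ) - 1) - 2 * a (l : ℤ) + a ((l : ℤ) + 1))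
    + (1 / (2 * (l : ℝ) + 1)) * (a ((l : ℤ) + 1) - a (l : ℤ))

theorem legP_succ_succ (n : ℕ) (x : ℝ) :
    legP (n + 2) x = ((2 * n + 3) * x * legP (n + 1) x - (n + 1) * legP n x) / (n + 2) :=
  rfl

theorem legP_at_one (n : ℕ) : legP n 1 = 1 := by
  induction n using Nat.twoStepInduction with
  | zero => rfl
  | one => rfl
  | more n ih₁ ih₂ =>
    rw [legP_succ_succ, ih₁, ih₂, div_eq_one_iff_eq (by positivity)]
    ring

theorem legP_recurrence (l : ℕ) (x : ℝ) :
    (2 * (l : ℝ) + 1) * x * legP l x = ((l : ℝ) + 1) * legP (l + 1) x + l * legP (l - 1) x := by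
  cases l with
  | zero => simp [legP]
  | succ m =>
    rw [legP_succ_succ, Nat.add_sub_cancel]
    push_cast
    field_simp
    ring

/-- `cosCoeff (k + 1) = (2k choose k) / 4 ^ k`, the coefficients of `(1 - t) ^ (-1/2)`; the leading
zero absorbs the boundary terms of the recurrences below. -/
noncomputable def cosCoeff : ℕ → ℝ
  | 0 => 0
  | 1 => 1
  | n + 2 => cosCoeff (n + 1) * (2 * n + 1) / (2 * n + 2)

theorem cosCoeff_succ_succ (n : ℕ) :
    cosCoeff (n + 2) = cosCoeff (n + 1) * (2 * n + 1) / (2 * n + 2) :=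
  rfl

theorem cosCoeff_nonneg (n : ℕ) : 0 ≤ cosCoeff n := by
  induction n using Nat.twoStepInduction with
  | zero => exact le_rfl
  | one => exact zero_le_one
  | more n _ ih => rw [cosCoeff_succ_succ]; positivity

theorem add_mul_cosCoeff_mul_cosCoeff (p q : ℕ) :
    ((p : ℝ) + q) * cosCoeff (p + 1) * cosCoeff (q + 1) =
      ((p : ℝ) + q - 1 / 2) * (cosCoeff (p + 1) * cosCoeff q + cosCoeff p * cosCoeff (q + 1))
        - ((p : ℝ) + q - 1) * (cosCoeff p * cosCoeff q) := by
  rcases p with _ | p <;> rcases q with _ | q <;>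
    simp only [cosCoeff, Nat.cast_add, Nat.cast_one, Nat.cast_zero] <;>
    field_simp <;> ring

noncomputable def legendreCosSum (n : ℕ) (θ : ℝ) : ℝ :=
  ∑ k ∈ Finset.range (n + 1), cosCoeff (k + 1) * cosCoeff (n + 1 - k) * cos ((n - 2 * k : ℝ) * θ)

theorem legendreCosSum_eq_sum_range (n : ℕ) (θ : ℝ) :
    legendreCosSum n θ = ∑ k ∈ Finset.range (n + 3),
      cosCoeff k * cosCoeff (n + 2 - k) * cos ((n + 2 - 2 * k : ℝ) * θ) := by
  conv_rhs => rw [Finset.sum_range_succ', Finset.sum_range_succ, Nat.sub_self]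
  simp only [cosCoeff.eq_1, mul_zero, zero_mul, add_zero, legendreCosSum]
  refine Finset.sum_congr rfl fun k _ => ?_
  rw [show n + 2 - (k + 1) = n + 1 - k by omega]
  push_cast
  ring_nf

theorem two_mul_cos_mul_legendreCosSum (n : ℕ) (θ : ℝ) :
    2 * cos θ * legendreCosSum (n + 1) θ = ∑ k ∈ Finset.range (n + 3),
      (cosCoeff (k + 1) * cosCoeff (n + 2 - k) + cosCoeff k * cosCoeff (n + 3 - k)) *
        cos ((n + 2 - 2 * k : ℝ) * θ) := by
  simp only [add_mul, Finset.sum_add_distrib]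
  rw [Finset.sum_range_succ (fun k => _ * cosCoeff (n + 2 - k) * _), Nat.sub_self,
    Finset.sum_range_succ' (fun k => cosCoeff k * _ * _), legendreCosSum,
    Finset.mul_sum, cosCoeff.eq_1]
  simp only [mul_zero, zero_mul, add_zero, ← Finset.sum_add_distrib]
  refine Finset.sum_congr rfl fun k _ => ?_
  have h := two_mul_cos_mul_cos θ (((n : ℝ) + 1 - 2 * k) * θ)
  rw [show θ - ((n : ℝ) + 1 - 2 * k) * θ = -((n - 2 * k : ℝ) * θ) by ring,
    show θ + ((n : ℝ) + 1 - 2 * k) * θ = (n + 2 - 2 * k : ℝ) * θ by ring, cos_neg] at h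
  rw [show n + 1 + 1 - k = n + 2 - k by omega, show n + 3 - (k + 1) = n + 2 - k by omega]
  push_cast
  rw [show ((n : ℝ) + 2 - 2 * (k + 1)) * θ = (n - 2 * k : ℝ) * θ by ring]
  linear_combination cosCoeff (k + 1) * cosCoeff (n + 2 - k) * h

theorem legP_cos (n : ℕ) (θ : ℝ) : legP n (cos θ) = legendreCosSum n θ := by
  induction n using Nat.twoStepInduction with
  | zero => simp [legP, legendreCosSum, cosCoeff]
  | one =>
    norm_num [legP, legendreCosSum, Finset.sum_range_succ, cosCoeff, cosCoeff_succ_succ]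
    ring
  | more n ih₁ ih₂ =>
    have key : ((n : ℝ) + 2) * legendreCosSum (n + 2) θ =
        ((n : ℝ) + 3 / 2) * (2 * cos θ * legendreCosSum (n + 1) θ)
          - ((n : ℝ) + 1) * legendreCosSum n θ := by
      rw [two_mul_cos_mul_legendreCosSum, legendreCosSum_eq_sum_range n, legendreCosSum,
        Finset.mul_sum, Finset.mul_sum, Finset.mul_sum, ← Finset.sum_sub_distrib]
      refine Finset.sum_congr rfl fun k hk => ?_
      have hk : k ≤ n + 2 := Nat.lt_succ_iff.mp (Finset.mem_range.mp hk)
      have h := add_mul_cosCoeff_mul_cosCoeff k (n + 2 - k)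
      rw [Nat.cast_sub hk, ← Nat.sub_add_comm hk] at h
      rw [show n + 2 + 1 - k = n + 3 - k by omega]
      push_cast at h ⊢
      linear_combination cos ((n + 2 - 2 * k : ℝ) * θ) * h
    rw [legP_succ_succ, ih₁, ih₂, div_eq_iff (by positivity)]
    linear_combination -key

theorem abs_legP_le_one (n : ℕ) {x : ℝ} (hx : |x| ≤ 1) : |legP n x| ≤ 1 := by
  have hsum : ∑ k ∈ Finset.range (n + 1), cosCoeff (k + 1) * cosCoeff (n + 1 - k) = 1 := by
    simpa [legendreCosSum, legP_at_one] using (legP_cos n 0).symm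
  rw [← cos_arccos (neg_le_of_abs_le hx) (le_of_abs_le hx), legP_cos, legendreCosSum, ← hsum]
  refine (Finset.abs_sum_le_sum_abs _ _).trans (Finset.sum_le_sum fun k _ => ?_)
  have hc := mul_nonneg (cosCoeff_nonneg (k + 1)) (cosCoeff_nonneg (n + 1 - k))
  rw [abs_mul, abs_of_nonneg hc]
  exact mul_le_of_le_one_right hc (abs_cos_le_one _)

theorem aone_mul (a : ℤ → ℝ) (l : ℕ) :
    aone a l * (2 * (l : ℝ) + 1) = a (l - 1) * l + a (l + 1) * (l + 1) - a l * (2 * l + 1) := by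
  rw [aone]
  field_simp
  ring

section Series

variable {a : ℤ → ℝ} (hsum : Summable fun l : ℕ => (2 * (l : ℝ) + 1) * |a l|) {x : ℝ} (hx : |x| ≤ 1)
include hsum hx

theorem summable_mul_legP {c : ℕ → ℝ} (hc₀ : ∀ l, 0 ≤ c l) (hc : ∀ l : ℕ, c l ≤ 2 * l + 1)
    (d : ℕ → ℕ) : Summable fun l : ℕ => a l * c l * legP (d l) x := by
  refine Summable.of_norm_bounded hsum fun l => ?_
  have hcP : c l * |legP (d l) x| ≤ 2 * l + 1 := by
    simpa using mul_le_mul (hc l) (abs_legP_le_one (d l) hx) (abs_nonneg _) ((hc₀ l).trans (hc l))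
  rw [Real.norm_eq_abs, mul_assoc, abs_mul, abs_mul, abs_of_nonneg (hc₀ l), mul_comm]
  exact mul_le_mul_of_nonneg_right hcP (abs_nonneg _)

theorem hasSum_aone_mul_legP :
    HasSum (fun l : ℕ => aone a l * (2 * (l : ℝ) + 1) * legP l x)
      ((x - 1) * ∑' l : ℕ, a l * (2 * (l : ℝ) + 1) * legP l x) := by
  obtain ⟨S, hf⟩ := summable_mul_legP hsum hx (c := fun l => 2 * l + 1)
    (fun _ => by positivity) (fun _ => le_rfl) fun l => l
  obtain ⟨U, hup⟩ := summable_mul_legP hsum hx (c := fun l => l + 1)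
    (fun _ => by positivity) (fun l => by linarith [l.cast_nonneg (α := ℝ)]) (· + 1)
  obtain ⟨V, hdown⟩ := summable_mul_legP hsum hx (c := fun l => l)
    (fun _ => by positivity) (fun l => by linarith [l.cast_nonneg (α := ℝ)]) (· - 1)
  have hxS : x * S = U + V := (hf.mul_left x).unique <| (hup.add hdown).congr_fun fun l => by
    linear_combination a l * legP_recurrence l x
  have hup' : HasSum (fun l : ℕ => a (l - 1) * l * legP l x) U := by
    refine (hasSum_nat_add_iff' 1).mp ?_
    simpa using hup
  have hdown' : HasSum (fun l : ℕ => a (l + 1) * (l + 1) * legP l x) V := by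
    simpa using (hasSum_nat_add_iff' 1).mpr hdown
  rw [hf.tsum_eq, sub_one_mul, hxS]
  refine ((hup'.add hdown').sub hf).congr_fun fun l => ?_
  rw [aone_mul]
  ring

end Series

theorem stmt2_general (a : ℤ → ℝ)
    (hsum : Summable (fun l : ℕ => (2 * (l : ℝ) + 1) * |a (l : ℤ)|)) :
    ∀ θ : ℝ, 0 ≤ θ → θ ≤ π →
      Summable (fun l : ℕ => |a (l : ℤ) * (2 * (l : ℝ) + 1) * legP l (cos θ)|) ∧
      Summable (fun l : ℕ => |aone a l * (2 * (l : ℝ) + 1) * legP l (cos θ)|) ∧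
      (cos θ - 1) * ∑' l : ℕ, a (l : ℤ) * (2 * (l : ℝ) + 1) * legP l (cos θ) =
        ∑' l : ℕ, aone a l * (2 * (l : ℝ) + 1) * legP l (cos θ) := by
  intro θ _ _
  have hx : |cos θ| ≤ 1 := abs_cos_le_one θ
  have hone := hasSum_aone_mul_legP hsum hx
  refine ⟨?_, summable_abs_iff.mpr hone.summable, hone.tsum_eq.symm⟩
  exact summable_abs_iff.mpr <| summable_mul_legP hsum hx (fun _ => by positivity) (fun _ => le_rfl) _

theorem stmt2 (a : ℤ → ℝ) (ha0 : a 0 = 0) (ham : a (-1) = 0)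
    (hsum : Summable (fun l : ℕ => (2 * (l : ℝ) + 1) * |a (l : ℤ)|)) :
    ∀ θ : ℝ, 0 ≤ θ → θ ≤ π →
      Summable (fun l : ℕ => |a (l : ℤ) * (2 * (l : ℝ) + 1) * legP l (cos θ)|) ∧
      Summable (fun l : ℕ => |aone a l * (2 * (l : ℝ) + 1) * legP l (cos θ)|) ∧
      (cos θ - 1) * ∑' l : ℕ, a (l : ℤ) * (2 * (l : ℝ) + 1) * legP l (cos θ) =
        ∑' l : ℕ, aone a l * (2 * (l : ℝ) + 1) * legP l (cos θ) :=
  stmt2_general a hsum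
end

section
/- Let f_0 be a Schwartz function on ℝ⁺. For every n ∈ ℕ, the n-th derivative ∂_s^n [ f_0(t² s(s+1)) ] is, for all t > 0 and s ≥ 0, a finite linear combination (with coefficients independent of t and s) of terms of the form t^{2i} s^{j} F(t² s(s+1)), where each F is a Schwartz function on ℝ⁺ and the integers i, j ≥ 0 satisfy 2i − j ≥ n. -/
/-!
Differentiating `t^(2i) s^j F(t² s(s+1))` in `s` gives
`j t^(2i) s^(j-1) F + t^(2i+2) (2 s^(j+1) + s^j) F'`, evaluated at `t² s(s+1)`, and `F'` is again
Schwartz: every term raises `2i - j` by at least one. So `∂_s` maps the span of the monomials with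
`2i - j ≥ n` into the span of those with `2i - j ≥ n + 1`, and induction starts from `f₀` itself
(`i = j = 0`).
-/

open SchwartzMap

noncomputable def weightedMonomial (i j : ℕ) (F : 𝓢(ℝ, ℝ)) : ℝ → ℝ → ℝ :=
  fun t s => t ^ (2 * i) * (s ^ j * F (t ^ 2 * (s * (s + 1))))

def weightedSpan (n : ℕ) : Submodule ℝ (ℝ → ℝ → ℝ) :=
  Submodule.span ℝ {g | ∃ i j F, n + j ≤ 2 * i ∧ g = weightedMonomial i j F}

lemma weightedMonomial_mem_weightedSpan {n i j : ℕ} (F : 𝓢(ℝ, ℝ)) (h : n + j ≤ 2 * i) :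
    weightedMonomial i j F ∈ weightedSpan n :=
  Submodule.subset_span ⟨i, j, F, h, rfl⟩

lemma hasDerivAt_weightedMonomial (i j : ℕ) (F : 𝓢(ℝ, ℝ)) (t s : ℝ) :
    HasDerivAt (weightedMonomial i j F t)
      (j * weightedMonomial i (j - 1) F t s
        + 2 * weightedMonomial (i + 1) (j + 1) (derivCLM ℝ ℝ F) t s
        + weightedMonomial (i + 1) j (derivCLM ℝ ℝ F) t s) s := by
  have hu : HasDerivAt (fun s' => t ^ 2 * (s' * (s' + 1))) (t ^ 2 * (2 * s + 1)) s := by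
    have := ((hasDerivAt_id s).mul ((hasDerivAt_id s).add_const 1)).const_mul (t ^ 2)
    exact this.congr_deriv (by simp only [id_eq]; ring)
  have hF : HasDerivAt (fun s' => F (t ^ 2 * (s' * (s' + 1))))
      (deriv F (t ^ 2 * (s * (s + 1))) * (t ^ 2 * (2 * s + 1))) s :=
    (F.hasDerivAt _).comp s hu
  have h := ((hasDerivAt_pow j s).fun_mul hF).const_mul (t ^ (2 * i))
  refine h.congr_deriv ?_
  simp only [weightedMonomial, derivCLM_apply]
  ring

lemma deriv_weightedMonomial_mem_weightedSpan {n i j : ℕ} (F : 𝓢(ℝ, ℝ)) (h : n + j ≤ 2 * i) :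
    (fun t s => deriv (weightedMonomial i j F t) s) ∈ weightedSpan (n + 1) := by
  have hderiv : (fun t s => deriv (weightedMonomial i j F t) s) =
      (j : ℝ) • weightedMonomial i (j - 1) F
        + (2 : ℝ) • weightedMonomial (i + 1) (j + 1) (derivCLM ℝ ℝ F)
        + weightedMonomial (i + 1) j (derivCLM ℝ ℝ F) := by
    ext t s
    simp [(hasDerivAt_weightedMonomial i j F t s).deriv]
  rw [hderiv]
  refine add_mem (add_mem ?_ (Submodule.smul_mem _ _ ?_)) ?_
  · -- for `j = 0` the truncated exponent `j - 1` would break the weight, but the coefficient is `0`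
    rcases Nat.eq_zero_or_pos j with rfl | hj
    · simp
    · exact Submodule.smul_mem _ _ (weightedMonomial_mem_weightedSpan F (by omega))
  all_goals exact weightedMonomial_mem_weightedSpan _ (by omega)

lemma differentiable_and_deriv_mem_weightedSpan {n : ℕ} {g : ℝ → ℝ → ℝ}
    (hg : g ∈ weightedSpan n) :
    (∀ t, Differentiable ℝ (g t)) ∧ (fun t s => deriv (g t) s) ∈ weightedSpan (n + 1) := by
  induction hg using Submodule.span_induction with
  | mem g hg =>
    obtain ⟨i, j, F, h, rfl⟩ := hg
    exact ⟨fun t s => (hasDerivAt_weightedMonomial i j F t s).differentiableAt,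
      deriv_weightedMonomial_mem_weightedSpan F h⟩
  | zero =>
    refine ⟨fun _ => differentiable_const 0, ?_⟩
    convert zero_mem (weightedSpan (n + 1)) using 3
    simp
  | add g₁ g₂ _ _ h₁ h₂ =>
    refine ⟨fun t => (h₁.1 t).add (h₂.1 t), ?_⟩
    convert add_mem h₁.2 h₂.2 using 1
    ext t s
    exact deriv_add (h₁.1 t s) (h₂.1 t s)
  | smul a g _ h =>
    refine ⟨fun t => (h.1 t).const_mul a, ?_⟩
    convert Submodule.smul_mem _ a h.2 using 1
    ext t s
    exact deriv_const_mul a (h.1 t s)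

lemma iteratedDeriv_comp_mem_weightedSpan (f₀ : 𝓢(ℝ, ℝ)) (n : ℕ) :
    (fun t s => iteratedDeriv n (fun s' => f₀ (t ^ 2 * (s' * (s' + 1)))) s) ∈ weightedSpan n := by
  induction n with
  | zero =>
    convert weightedMonomial_mem_weightedSpan (n := 0) (i := 0) (j := 0) f₀ le_rfl using 1
    ext t s
    simp [weightedMonomial]
  | succ n ih =>
    simpa only [iteratedDeriv_succ] using (differentiable_and_deriv_mem_weightedSpan ih).2

lemma exists_sum_eq_of_mem_weightedSpan {n : ℕ} {g : ℝ → ℝ → ℝ} (hg : g ∈ weightedSpan n) :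
    ∃ (m : ℕ) (c : Fin m → ℝ) (i j : Fin m → ℕ) (F : Fin m → 𝓢(ℝ, ℝ)),
      (∀ k, n + j k ≤ 2 * i k) ∧
      ∀ t s, g t s = ∑ k, c k * t ^ (2 * i k) * s ^ j k * F k (t ^ 2 * (s * (s + 1))) := by
  obtain ⟨m, c, g', rfl⟩ := Submodule.mem_span_set'.mp hg
  choose i j F h hg' using fun k => (g' k).2
  refine ⟨m, c, i, j, F, h, fun t s => ?_⟩
  simp only [Finset.sum_apply, Pi.smul_apply, hg', weightedMonomial, smul_eq_mul, mul_assoc]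

theorem stmt8 (f₀ : SchwartzMap ℝ ℝ) :
    ∀ n : ℕ, ∃ (m : ℕ) (c : Fin m → ℝ) (i j : Fin m → ℕ) (F : Fin m → SchwartzMap ℝ ℝ),
      (∀ k : Fin m, n + j k ≤ 2 * i k) ∧
      ∀ t : ℝ, 0 < t → ∀ s : ℝ, 0 ≤ s →
        iteratedDeriv n (fun s' : ℝ => f₀ (t ^ 2 * (s' * (s' + 1)))) s =
          ∑ k : Fin m, c k * t ^ (2 * i k) * s ^ (j k) * F k (t ^ 2 * (s * (s + 1))) := by
  intro n
  obtain ⟨m, c, i, j, F, hij, heq⟩ :=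
    exists_sum_eq_of_mem_weightedSpan (iteratedDeriv_comp_mem_weightedSpan f₀ n)
  exact ⟨m, c, i, j, F, hij, fun t _ s _ => heq t s⟩
end

section
/- Let r ∈ ℕ, let f_0 be a Schwartz function on ℝ⁺, set f(s) = s^r f_0(s), and for t > 0 define g_t(s) = f(t² s(s+1)). Then for every i ∈ ℕ there exists a constant C_i, independent of t, such that for all t > 0 and all s ≥ 1: |∂_s^i ( g_t(s)² )| ≤ C_i · t^{4r} · s^{4r − i}. -/
/-!
Write `g_t(s)² = F (t² s (s + 1))` with `F = f²`. The function `F` satisfies the symbol estimates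
`|F⁽ᵏ⁾ u| ≤ C_k u ^ (2r - k)` on `(0, ∞)`: `x ^ r` is a symbol of order `r`, a Schwartz function one
of order `0`, and orders add under products by Leibniz' rule. For the composition, rescale
`s ↦ s σ`: near `σ = 1`, `F (t² sσ (sσ + 1)) = G (σ² + σ / s)` with `G v = F (t² s² v)`. The
derivatives of `G` at `v ∈ [1, 2]` are `O((t s) ^ 4r)`, those of `σ² + σ / s` at `1` are bounded by
`3 ^ k`, so the Faà di Bruno bound `norm_iteratedFDeriv_comp_le` gives `O((t s) ^ 4r)` for the
`i`-th derivative in `σ`, which is `s ^ i` times the `i`-th derivative in `s`.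
-/

open Real
open scoped ContDiff

def IsSymbol (m : ℝ) (F : ℝ → ℝ) : Prop :=
  ContDiff ℝ ∞ F ∧ ∀ k : ℕ, ∃ C : ℝ, ∀ u : ℝ, 0 < u → |iteratedDeriv k F u| ≤ C * u ^ (m - k)

theorem SchwartzMap.isSymbol_zero (f : SchwartzMap ℝ ℝ) : IsSymbol 0 f := by
  refine ⟨f.smooth ⊤, fun k => ?_⟩
  obtain ⟨C, -, hC⟩ := f.decay k k
  refine ⟨C, fun u hu => ?_⟩
  have hC' := hC u
  simp only [norm_iteratedFDeriv_eq_norm_iteratedDeriv, norm_eq_abs, abs_of_pos hu] at hC'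
  rw [zero_sub, rpow_neg hu.le, rpow_natCast, ← div_eq_mul_inv, le_div_iff₀ (by positivity)]
  linarith

theorem isSymbol_pow (n : ℕ) : IsSymbol n (· ^ n) := by
  refine ⟨contDiff_id.pow n, fun k => ⟨n.descFactorial k, fun u hu => ?_⟩⟩
  rw [iteratedDeriv_pow, abs_of_nonneg (by positivity)]
  rcases le_or_gt k n with hkn | hnk
  · rw [← Nat.cast_sub hkn, rpow_natCast]
  · simp [Nat.descFactorial_eq_zero_iff_lt.mpr hnk]

theorem IsSymbol.mul {m m' : ℝ} {F G : ℝ → ℝ} (hF : IsSymbol m F) (hG : IsSymbol m' G) :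
    IsSymbol (m + m') (fun u => F u * G u) := by
  refine ⟨hF.1.mul hG.1, fun k => ?_⟩
  choose C hC using hF.2
  choose C' hC' using hG.2
  refine ⟨∑ j ∈ Finset.range (k + 1), k.choose j * C j * C' (k - j), fun u hu => ?_⟩
  rw [iteratedDeriv_fun_mul (hF.1.of_le (mod_cast le_top)).contDiffAt
    (hG.1.of_le (mod_cast le_top)).contDiffAt, Finset.sum_mul]
  refine (Finset.abs_sum_le_sum_abs _ _).trans (Finset.sum_le_sum fun j hj => ?_)
  have hjk : j ≤ k := Nat.lt_succ_iff.mp (Finset.mem_range.mp hj)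
  have hexp : u ^ (m + m' - k) = u ^ (m - j) * u ^ (m' - (k - j : ℕ)) := by
    rw [← rpow_add hu, Nat.cast_sub hjk]; ring_nf
  rw [abs_mul, abs_mul, Nat.abs_cast, hexp]
  calc (k.choose j : ℝ) * |iteratedDeriv j F u| * |iteratedDeriv (k - j) G u|
      ≤ k.choose j * (C j * u ^ (m - j)) * (C' (k - j) * u ^ (m' - (k - j : ℕ))) := by
        gcongr
        · exact mul_nonneg (Nat.cast_nonneg _) ((abs_nonneg _).trans (hC j u hu))
        · exact hC j u hu
        · exact hC' (k - j) u hu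
    _ = _ := by ring

theorem rpow_le_two_rpow_abs {v : ℝ} (a : ℝ) (h1 : 1 ≤ v) (h2 : v ≤ 2) : v ^ a ≤ 2 ^ |a| :=
  (rpow_le_rpow_of_exponent_le h1 (le_abs_self a)).trans
    (rpow_le_rpow (by linarith) h2 (abs_nonneg a))

theorem IsSymbol.exists_abs_iteratedDeriv_comp_mul_le {m : ℝ} {F : ℝ → ℝ} (hF : IsSymbol m F)
    (k : ℕ) : ∃ C, 0 ≤ C ∧ ∀ lam : ℝ, 0 < lam → ∀ v : ℝ, 1 ≤ v → v ≤ 2 →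
      |iteratedDeriv k (fun v => F (lam * v)) v| ≤ C * lam ^ m := by
  obtain ⟨C, hC⟩ := hF.2 k
  refine ⟨|C| * 2 ^ |m - k|, by positivity, fun lam hlam v hv1 hv2 => ?_⟩
  have hv : 0 < v := by linarith
  rw [iteratedDeriv_comp_const_mul (hF.1.of_le (mod_cast le_top)), abs_mul,
    abs_of_pos (pow_pos hlam k)]
  calc lam ^ k * |iteratedDeriv k F (lam * v)|
      ≤ lam ^ k * (|C| * (lam * v) ^ (m - k)) := by
        gcongr
        exact (hC _ (mul_pos hlam hv)).trans (by gcongr; exact le_abs_self C)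
    _ = |C| * v ^ (m - k) * lam ^ m := by
        rw [mul_rpow hlam.le hv.le, rpow_sub hlam, rpow_natCast]
        field_simp
    _ ≤ |C| * 2 ^ |m - k| * lam ^ m := by
        gcongr
        exact rpow_le_two_rpow_abs _ hv1 hv2

theorem abs_iteratedDeriv_sq_add_mul_le {ε : ℝ} (hε0 : 0 ≤ ε) (hε1 : ε ≤ 1) {k : ℕ}
    (hk : 1 ≤ k) : |iteratedDeriv k (fun σ => σ ^ 2 + ε * σ) 1| ≤ 3 ^ k := by
  rw [iteratedDeriv_fun_add (f := (· ^ 2)) (g := (ε * ·)) (by fun_prop) (by fun_prop),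
    iteratedDeriv_pow, iteratedDeriv_const_mul_field ε (fun x : ℝ => x), iteratedDeriv_fun_id]
  rcases k with _ | _ | _ | k
  · omega
  · norm_num [abs_le]
    constructor <;> linarith
  · norm_num
  · simp

theorem IsSymbol.exists_abs_iteratedDeriv_comp_quadratic_le {m : ℝ} {F : ℝ → ℝ} (hF : IsSymbol m F)
    (i : ℕ) : ∃ C : ℝ, ∀ t : ℝ, 0 < t → ∀ s : ℝ, 1 ≤ s →
      |iteratedDeriv i (fun s => F (t ^ 2 * (s * (s + 1)))) s| ≤
        C * t ^ (2 * m) * s ^ (2 * m - i) := by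
  choose C hC0 hC using hF.exists_abs_iteratedDeriv_comp_mul_le
  obtain ⟨K, hK⟩ : ∃ K, K = ∑ k ∈ Finset.range (i + 1), C k := ⟨_, rfl⟩
  refine ⟨i.factorial * K * 3 ^ i, fun t ht s hs => ?_⟩
  have hs0 : 0 < s := by linarith
  obtain ⟨lam, hlam_def⟩ : ∃ lam, lam = t ^ 2 * s ^ 2 := ⟨_, rfl⟩
  have hlam : 0 < lam := by rw [hlam_def]; positivity
  have hP : ContDiff ℝ ∞ (fun s => F (t ^ 2 * (s * (s + 1)))) := hF.1.comp (by fun_prop)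
  have hscale : (fun σ => F (t ^ 2 * ((s * σ) * (s * σ + 1)))) =
      (fun v => F (lam * v)) ∘ (fun σ => σ ^ 2 + s⁻¹ * σ) := by
    funext σ
    simp only [hlam_def, Function.comp]
    congr 1
    field_simp
  have hGC : ∀ k ≤ i,
      ‖iteratedFDeriv ℝ k (fun v => F (lam * v)) (1 ^ 2 + s⁻¹ * 1)‖ ≤ K * lam ^ m := by
    intro k hk
    rw [norm_iteratedFDeriv_eq_norm_iteratedDeriv, norm_eq_abs]
    refine (hC k lam hlam _ ?_ ?_).trans ?_
    · simp only [one_pow, mul_one, le_add_iff_nonneg_right, inv_nonneg, hs0.le]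
    · linarith [inv_le_one_of_one_le₀ hs]
    · gcongr
      rw [hK]; exact Finset.single_le_sum (fun j _ => hC0 j) (Finset.mem_range.mpr (by omega))
  have hφ : ∀ k, 1 ≤ k → k ≤ i → ‖iteratedFDeriv ℝ k (fun σ => σ ^ 2 + s⁻¹ * σ) 1‖ ≤ 3 ^ k :=
    fun k hk _ => by
      rw [norm_iteratedFDeriv_eq_norm_iteratedDeriv, norm_eq_abs]
      exact abs_iteratedDeriv_sq_add_mul_le (by positivity) (inv_le_one_of_one_le₀ hs) hk
  have hG : ContDiff ℝ ∞ (fun v => F (lam * v)) := hF.1.comp (by fun_prop)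
  have hφs : ContDiff ℝ ∞ (fun σ : ℝ => σ ^ 2 + s⁻¹ * σ) := by fun_prop
  have hcomp := norm_iteratedFDeriv_comp_le hG hφs (mod_cast le_top) 1 hGC hφ
  rw [← hscale, norm_iteratedFDeriv_eq_norm_iteratedDeriv, norm_eq_abs,
    iteratedDeriv_comp_const_mul (hP.of_le (mod_cast le_top))] at hcomp
  simp only [mul_one, abs_mul, abs_of_pos (pow_pos hs0 i)] at hcomp
  have hlam_m : lam ^ m = t ^ (2 * m) * s ^ (2 * m) := by
    rw [hlam_def, rpow_mul ht.le, rpow_mul hs0.le, rpow_two, rpow_two,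
      mul_rpow (by positivity) (by positivity)]
  rw [hlam_m] at hcomp
  rw [rpow_sub hs0, rpow_natCast, mul_div_assoc', le_div_iff₀ (pow_pos hs0 i)]
  linarith

theorem stmt9 (r : ℕ) (f₀ : SchwartzMap ℝ ℝ) (f : ℝ → ℝ)
    (hf : ∀ s : ℝ, f s = s ^ r * f₀ s) :
    ∀ i : ℕ, ∃ Ci : ℝ, ∀ t : ℝ, 0 < t → ∀ s : ℝ, 1 ≤ s →
      |iteratedDeriv i (fun s' : ℝ => (f (t ^ 2 * (s' * (s' + 1)))) ^ 2) s| ≤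
        Ci * t ^ (4 * r) * s ^ (4 * (r : ℝ) - (i : ℝ)) := by
  intro i
  have hf_symbol : IsSymbol r f := by
    simpa [funext hf] using (isSymbol_pow r).mul f₀.isSymbol_zero
  obtain ⟨C, hC⟩ := (hf_symbol.mul hf_symbol).exists_abs_iteratedDeriv_comp_quadratic_le i
  refine ⟨C, fun t ht s hs => ?_⟩
  convert hC t ht s hs using 3
  · simp only [sq]
  · rw [← rpow_natCast]; push_cast; ring_nf
  · ring_nf
end
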